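/- Let V be a finite-dimensional vector space over a field k, and let R be an invertible linear endomorphism of V ⊗ V satisfying the Yang–Baxter equation R₁₂ R₁₃ R₂₃ = R₂₃ R₁₃ R₁₂ in End(V ⊗ V ⊗ V). Suppose F ∈ End(V ⊗ V) is invertible and Φ, Ψ ∈ End(V ⊗ V ⊗ V) are invertible elements satisfying: (1) Φ ∘ F₁₂ = Ψ ∘ F₂₃, (2) R₁₂ ∘ Φ = Φ^{(213)} ∘ R₁₂, (3) R₂₃ ∘ Ψ = Ψ^{(132)} ∘ R₂₃, where for a permutation σ of {1,2,3}, X^{(σ)} denotes conjugation of X by the corresponding permutation of tensor factors, and subscripts indicate the legs on which an operator acts. Then R̃ := τ(F)⁻¹ ∘ R ∘ F satisfies the Yang–Baxter equation R̃₁₂ R̃₁₃ R̃₂₃ = R̃₂₃ R̃₁₃ R̃₁₂, where τ(F) = P ∘ F ∘ P and P is the flip of V ⊗ V. -/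

import Mathlib

open TensorProduct

noncomputable section
variable (k V : Type*) [Field k] [AddCommGroup V] [Module k V]

/-- The flip `P : V ⊗ V → V ⊗ V`. -/
def flipE : Module.End k (V ⊗[k] V) := (TensorProduct.comm k V V).toLinearMap

/-- `τ(X) = P X P`. -/
def tauE (X : Module.End k (V ⊗[k] V)) : Module.End k (V ⊗[k] V) :=
  flipE k V * X * flipE k V

/-- The embedding `X ↦ X₂₃` into `End(V ⊗ V ⊗ V)`. -/
def leg23 (X : Module.End k (V ⊗[k] V)) : Module.End k (V ⊗[k] (V ⊗[k] V)) :=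
  LinearMap.lTensor V X

/-- The embedding `X ↦ X₁₂` into `End(V ⊗ V ⊗ V)`. -/
def leg12 (X : Module.End k (V ⊗[k] V)) : Module.End k (V ⊗[k] (V ⊗[k] V)) :=
  (TensorProduct.assoc k V V V).toLinearMap ∘ₗ LinearMap.rTensor V X ∘ₗ
    (TensorProduct.assoc k V V V).symm.toLinearMap

/-- The flip of factors 1 and 2. -/
def P12 : Module.End k (V ⊗[k] (V ⊗[k] V)) := leg12 k V (flipE k V)

/-- The flip of factors 2 and 3. -/
def P23 : Module.End k (V ⊗[k] (V ⊗[k] V)) := leg23 k V (flipE k V)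

/-- The embedding `X ↦ X₁₃`. -/
def leg13 (X : Module.End k (V ⊗[k] V)) : Module.End k (V ⊗[k] (V ⊗[k] V)) :=
  P23 k V * leg12 k V X * P23 k V

/-- The Yang–Baxter equation `R₁₂R₁₃R₂₃ = R₂₃R₁₃R₁₂`. -/
def YB (R : Module.End k (V ⊗[k] V)) : Prop :=
  leg12 k V R * leg13 k V R * leg23 k V R = leg23 k V R * leg13 k V R * leg12 k V R

lemma tw_comm_inv {M : Type*} [Monoid M] {x y y' : M} (h : x*y = y*x)
    (h1 : y*y' = 1) (h2 : y'*y = 1) : x*y' = y'*x := by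
  calc x*y' = y'*(y*(x*y')) := by rw [← mul_assoc y' y (x*y'), h2, one_mul]
    _ = y'*((x*y)*y') := by rw [← mul_assoc y x y', ← h]
    _ = y'*x := by rw [mul_assoc x y y', h1, mul_one]

lemma tw_braid_iff {M : Type*} [Monoid M] (p q a b c : M)
    (hpp : p*p = 1) (hqq : q*q = 1)
    (hb : q*(a*q) = b) (hk : p*(c*p) = b)
    (hB : p*(q*p) = q*(p*q)) :
    (a*b*c = c*b*a) ↔ (p*a)*((q*c)*(p*a)) = (q*c)*((p*a)*(q*c)) := by
  have m1 : a*q = q*b := by rw [← hb, ← mul_assoc q q (a*q), hqq, one_mul]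
  have m2 : c*p = p*b := by rw [← hk, ← mul_assoc p p (c*p), hpp, one_mul]
  have m3 : b*p = p*c := by rw [← hk, mul_assoc p (c*p) p, mul_assoc c p p, hpp, mul_one]
  have m4 : b*q = q*a := by rw [← hb, mul_assoc q (a*q) q, mul_assoc a q q, hqq, mul_one]
  have m1x : ∀ x : M, a*(q*x) = q*(b*x) := fun x => by
    rw [← mul_assoc a q x, m1, mul_assoc q b x]
  have m2x : ∀ x : M, c*(p*x) = p*(b*x) := fun x => by
    rw [← mul_assoc c p x, m2, mul_assoc p b x]
  have m3x : ∀ x : M, b*(p*x) = p*(c*x) := fun x => by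
    rw [← mul_assoc b p x, m3, mul_assoc p c x]
  have m4x : ∀ x : M, b*(q*x) = q*(a*x) := fun x => by
    rw [← mul_assoc b q x, m4, mul_assoc q a x]
  have hBx : ∀ x : M, q*(p*(q*x)) = p*(q*(p*x)) := fun x => by
    simpa only [mul_assoc] using congrArg (· * x) hB.symm
  have L : (p*a)*((q*c)*(p*a)) = p*(q*(p*(c*(b*a)))) := by
    simp only [mul_assoc]; rw [m1x, m2x, m3x]
  have Rr : (q*c)*((p*a)*(q*c)) = q*(p*(q*(a*(b*c)))) := by
    simp only [mul_assoc]; rw [m2x, m1x, m4x]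
  have cp : ∀ u v : M, p*u = p*v → u = v := by
    intro u v h
    have h2 := congrArg (fun z => p*z) h
    rw [← mul_assoc p p u, ← mul_assoc p p v, hpp, one_mul, one_mul] at h2
    exact h2
  have cq : ∀ u v : M, q*u = q*v → u = v := by
    intro u v h
    have h2 := congrArg (fun z => q*z) h
    rw [← mul_assoc q q u, ← mul_assoc q q v, hqq, one_mul, one_mul] at h2
    exact h2
  constructor
  · intro h
    have h' : c*(b*a) = a*(b*c) := by
      have h2 : c*b*a = a*b*c := h.symm
      simpa only [mul_assoc] using h2
    rw [L, Rr, hBx, h']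
  · intro h
    rw [L, Rr, hBx] at h
    have h' := cp _ _ (cq _ _ (cp _ _ h))
    have h'' := h'.symm
    simp only [← mul_assoc] at h''
    exact h''

lemma tw_main {M : Type*} [Monoid M] (r s α α' γ γ' Φ Φ' Ψ Ψ' : M)
    (hαα' : α*α' = 1) (hα'α : α'*α = 1) (hγγ' : γ*γ' = 1) (hγ'γ : γ'*γ = 1)
    (hΦ : Φ*Φ' = 1) (hΦ' : Φ'*Φ = 1) (hΨ : Ψ*Ψ' = 1) (hΨ' : Ψ'*Ψ = 1)
    (c1 : Φ*α = Ψ*γ) (crΦ : r*Φ = Φ*r) (csΨ : s*Ψ = Ψ*s)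
    (hbraid : r*(s*r) = s*(r*s)) :
    (α'*(r*α))*((γ'*(s*γ))*(α'*(r*α))) = (γ'*(s*γ))*((α'*(r*α))*(γ'*(s*γ))) := by
  have crΦ' : r*Φ' = Φ'*r := tw_comm_inv crΦ hΦ hΦ'
  have csΨ' : s*Ψ' = Ψ'*s := tw_comm_inv csΨ hΨ hΨ'
  have f3 : α'*Φ' = γ'*Ψ' := by
    refine left_inv_eq_right_inv (a := Φ*α) ?_ ?_
    · rw [mul_assoc α' Φ' (Φ*α), ← mul_assoc Φ' Φ α, hΦ', one_mul, hα'α]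
    · rw [c1, mul_assoc Ψ γ (γ'*Ψ'), ← mul_assoc γ γ' Ψ', hγγ', one_mul, hΨ]
  have f1 : α*γ' = Φ'*Ψ := by
    refine left_inv_eq_right_inv (a := Ψ'*Φ) ?_ ?_
    · rw [mul_assoc α γ' (Ψ'*Φ), ← mul_assoc γ' Ψ' Φ, ← f3, mul_assoc α' Φ' Φ,
        hΦ', mul_one, hαα']
    · rw [mul_assoc Ψ' Φ (Φ'*Ψ), ← mul_assoc Φ Φ' Ψ, hΦ, one_mul, hΨ']
  have f2 : γ*α' = Ψ'*Φ := by
    refine left_inv_eq_right_inv (a := Φ'*Ψ) ?_ ?_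
    · rw [mul_assoc γ α' (Φ'*Ψ), ← mul_assoc α' Φ' Ψ, f3, mul_assoc γ' Ψ' Ψ,
        hΨ', mul_one, hγγ']
    · rw [mul_assoc Φ' Ψ (Ψ'*Φ), ← mul_assoc Ψ Ψ' Φ, hΨ, one_mul, hΦ']
  have f1x : ∀ x : M, α*(γ'*x) = Φ'*(Ψ*x) := fun x => by
    rw [← mul_assoc α γ' x, f1, mul_assoc Φ' Ψ x]
  have f2x : ∀ x : M, γ*(α'*x) = Ψ'*(Φ*x) := fun x => by
    rw [← mul_assoc γ α' x, f2, mul_assoc Ψ' Φ x]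
  have f3x : ∀ x : M, α'*(Φ'*x) = γ'*(Ψ'*x) := fun x => by
    rw [← mul_assoc α' Φ' x, f3, mul_assoc γ' Ψ' x]
  have cΦrx : ∀ x : M, Φ*(r*x) = r*(Φ*x) := fun x => by
    rw [← mul_assoc Φ r x, ← crΦ, mul_assoc r Φ x]
  have crΦ'x : ∀ x : M, r*(Φ'*x) = Φ'*(r*x) := fun x => by
    rw [← mul_assoc r Φ' x, crΦ', mul_assoc Φ' r x]
  have cΨsx : ∀ x : M, Ψ*(s*x) = s*(Ψ*x) := fun x => by
    rw [← mul_assoc Ψ s x, ← csΨ, mul_assoc s Ψ x]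
  have csΨ'x : ∀ x : M, s*(Ψ'*x) = Ψ'*(s*x) := fun x => by
    rw [← mul_assoc s Ψ' x, csΨ', mul_assoc Ψ' s x]
  have hΨΨ'x : ∀ x : M, Ψ*(Ψ'*x) = x := fun x => by
    rw [← mul_assoc Ψ Ψ' x, hΨ, one_mul]
  have hΦΦ'x : ∀ x : M, Φ*(Φ'*x) = x := fun x => by
    rw [← mul_assoc Φ Φ' x, hΦ, one_mul]
  have braidx : ∀ x : M, r*(s*(r*x)) = s*(r*(s*x)) := fun x => by
    simpa only [mul_assoc] using congrArg (· * x) hbraid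
  simp only [mul_assoc]
  conv_lhs => rw [f1x, f2x, cΨsx, hΨΨ'x, cΦrx, crΦ'x, braidx, c1, f3x]
  conv_rhs => rw [f1x, f2x, cΦrx, hΦΦ'x, cΨsx, csΨ'x]

noncomputable section TwistAux
variable (k V : Type*) [Field k] [AddCommGroup V] [Module k V]

lemma tw_leg23_mul (X Y : Module.End k (V ⊗[k] V)) :
    leg23 k V (X * Y) = leg23 k V X * leg23 k V Y := by
  simp [leg23, Module.End.mul_eq_comp, LinearMap.lTensor_comp]

lemma tw_leg12_mul (X Y : Module.End k (V ⊗[k] V)) :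
    leg12 k V (X * Y) = leg12 k V X * leg12 k V Y := by
  simp [leg12, Module.End.mul_eq_comp, LinearMap.rTensor_comp]
  ext x
  simp

lemma tw_flipE_sq : flipE k V * flipE k V = 1 := by
  ext x y
  simp [flipE, Module.End.mul_eq_comp]

lemma tw_leg23_one : leg23 k V 1 = 1 := by
  rw [leg23, Module.End.one_eq_id, LinearMap.lTensor_id]; rfl

lemma tw_leg12_one : leg12 k V 1 = 1 := by
  rw [leg12, Module.End.one_eq_id, LinearMap.rTensor_id]
  ext x; simp

lemma tw_P12_sq : P12 k V * P12 k V = 1 := by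
  rw [P12, ← tw_leg12_mul, tw_flipE_sq, tw_leg12_one]

lemma tw_P23_sq : P23 k V * P23 k V = 1 := by
  rw [P23, ← tw_leg23_mul, tw_flipE_sq, tw_leg23_one]

lemma tw_key_aux (w : V) (t : V ⊗[k] V) :
    (TensorProduct.assoc k V V V)
      ((LinearMap.rTensor V (TensorProduct.comm k V V).toLinearMap)
        ((TensorProduct.assoc k V V V).symm (w ⊗ₜ[k] t))) =
    (LinearMap.lTensor V (TensorProduct.comm k V V).toLinearMap)
      ((TensorProduct.assoc k V V V) (t ⊗ₜ[k] w)) := by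
  induction t using TensorProduct.induction_on with
  | zero => simp
  | tmul a b => simp
  | add s t hs ht => simp only [tmul_add, add_tmul, map_add, hs, ht]

lemma tw_key (X : Module.End k (V ⊗[k] V)) :
    P12 k V * leg23 k V X * P12 k V = P23 k V * leg12 k V X * P23 k V := by
  ext v w u
  simp only [P12, P23, leg12, leg23, flipE, Module.End.mul_eq_comp, LinearMap.coe_comp,
    Function.comp_apply, LinearEquiv.coe_coe, TensorProduct.assoc_symm_tmul,
    LinearMap.rTensor_tmul, TensorProduct.comm_tmul, TensorProduct.assoc_tmul,
    LinearMap.lTensor_tmul, LinearMap.compr₂_apply, TensorProduct.mk_apply]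
  exact tw_key_aux k V w (X (v ⊗ₜ[k] u))

lemma tw_yb_iff_braid (X : Module.End k (V ⊗[k] V)) :
    YB k V X ↔
      leg12 k V (flipE k V * X) * (leg23 k V (flipE k V * X) * leg12 k V (flipE k V * X)) =
      leg23 k V (flipE k V * X) * (leg12 k V (flipE k V * X) * leg23 k V (flipE k V * X)) := by
  have e1 : leg12 k V (flipE k V * X) = P12 k V * leg12 k V X :=
    tw_leg12_mul k V (flipE k V) X
  have e2 : leg23 k V (flipE k V * X) = P23 k V * leg23 k V X :=
    tw_leg23_mul k V (flipE k V) X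
  rw [e1, e2]
  have hb : P23 k V * (leg12 k V X * P23 k V) = leg13 k V X :=
    (mul_assoc (P23 k V) (leg12 k V X) (P23 k V)).symm
  have hk2 : P12 k V * (leg23 k V X * P12 k V) = leg13 k V X := by
    have h := tw_key k V X
    rw [mul_assoc (P12 k V) (leg23 k V X) (P12 k V)] at h
    exact h
  have hB : P12 k V * (P23 k V * P12 k V) = P23 k V * (P12 k V * P23 k V) := by
    have h := tw_key k V (flipE k V)
    rw [mul_assoc (P12 k V) (leg23 k V (flipE k V)) (P12 k V),
      mul_assoc (P23 k V) (leg12 k V (flipE k V)) (P23 k V)] at h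
    exact h
  exact tw_braid_iff (P12 k V) (P23 k V) (leg12 k V X) (leg13 k V X) (leg23 k V X)
    (tw_P12_sq k V) (tw_P23_sq k V) hb hk2 hB

end TwistAux

/-- Theorem 1 of the paper: twisting a solution of the Yang–Baxter
equation.  If `R` is an invertible solution of YBE and `F, Φ, Ψ` are invertible with
`Φ F₁₂ = Ψ F₂₃`, `R₁₂ Φ = Φ^{(213)} R₁₂`, `R₂₃ Ψ = Ψ^{(132)} R₂₃`, then
`R̃ = τ(F)⁻¹ R F` is again a solution of YBE. -/
theorem twist_yang_baxter [FiniteDimensional k V]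
    (R R' F F' : Module.End k (V ⊗[k] V))
    (Φ Φ' Ψ Ψ' : Module.End k (V ⊗[k] (V ⊗[k] V)))
    (hR : R * R' = 1) (hR' : R' * R = 1)
    (hF : F * F' = 1) (hF' : F' * F = 1)
    (hΦ : Φ * Φ' = 1) (hΦ' : Φ' * Φ = 1)
    (hΨ : Ψ * Ψ' = 1) (hΨ' : Ψ' * Ψ = 1)
    (hYB : YB k V R)
    (cond1 : Φ * leg12 k V F = Ψ * leg23 k V F)
    (cond2 : leg12 k V R * Φ = (P12 k V * Φ * P12 k V) * leg12 k V R)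
    (cond3 : leg23 k V R * Ψ = (P23 k V * Ψ * P23 k V) * leg23 k V R) :
    YB k V (tauE k V F' * R * F) := by
  have key1 : flipE k V * (tauE k V F' * R * F) = F' * ((flipE k V * R) * F) := by
    unfold tauE
    simp only [← mul_assoc]
    rw [tw_flipE_sq, one_mul]
  rw [tw_yb_iff_braid, key1]
  have s12 : leg12 k V (F' * ((flipE k V * R) * F)) =
      leg12 k V F' * (leg12 k V (flipE k V * R) * leg12 k V F) := by
    rw [tw_leg12_mul, tw_leg12_mul]
  have s23 : leg23 k V (F' * ((flipE k V * R) * F)) =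
      leg23 k V F' * (leg23 k V (flipE k V * R) * leg23 k V F) := by
    rw [tw_leg23_mul, tw_leg23_mul]
  rw [s12, s23]
  have hαα' : leg12 k V F * leg12 k V F' = 1 := by
    rw [← tw_leg12_mul, hF, tw_leg12_one]
  have hα'α : leg12 k V F' * leg12 k V F = 1 := by
    rw [← tw_leg12_mul, hF', tw_leg12_one]
  have hγγ' : leg23 k V F * leg23 k V F' = 1 := by
    rw [← tw_leg23_mul, hF, tw_leg23_one]
  have hγ'γ : leg23 k V F' * leg23 k V F = 1 := by
    rw [← tw_leg23_mul, hF', tw_leg23_one]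
  have hr : leg12 k V (flipE k V * R) = P12 k V * leg12 k V R :=
    tw_leg12_mul k V (flipE k V) R
  have hs : leg23 k V (flipE k V * R) = P23 k V * leg23 k V R :=
    tw_leg23_mul k V (flipE k V) R
  have crΦ : leg12 k V (flipE k V * R) * Φ = Φ * leg12 k V (flipE k V * R) := by
    rw [hr, mul_assoc (P12 k V) (leg12 k V R) Φ, cond2]
    simp only [← mul_assoc]
    rw [tw_P12_sq, one_mul]
  have csΨ : leg23 k V (flipE k V * R) * Ψ = Ψ * leg23 k V (flipE k V * R) := by
    rw [hs, mul_assoc (P23 k V) (leg23 k V R) Ψ, cond3]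
    simp only [← mul_assoc]
    rw [tw_P23_sq, one_mul]
  have hbraid := (tw_yb_iff_braid k V R).mp hYB
  exact tw_main _ _ _ _ _ _ Φ Φ' Ψ Ψ' hαα' hα'α hγγ' hγ'γ hΦ hΦ' hΨ hΨ' cond1 crΦ csΨ hbraid
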